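/- Let (V, ω) be a finite-dimensional real symplectic vector space and let W ⊆ V be a coisotropic subspace, i.e. W^ω ⊆ W. Equip V × W with the alternating bilinear form Ω((u₁, w₁), (u₂, w₂)) = ω(u₁, u₂) − ω(w₁, w₂), and let Δ_W = {(w, w) : w ∈ W} be the diagonal. Then there exists a linear subspace S ⊆ V × W with Δ_W ⊆ S such that the restriction of Ω to S is nondegenerate, dim S = 2 · dim W, and Δ_W is a Lagrangian subspace of (S, Ω|_S), i.e. Δ_W equals its Ω-orthogonal complement computed inside S. -/

import Mathlib

/-!
Take a complement `X` of `W^ω` in `V` and `S = {(u, w) : u - w ∈ X}`. The diagonal is the kernel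
of `(u, w) ↦ u - w`, so `dim S = dim W + dim X = 2 dim W`. If `(u, w) ∈ S` is `Ω`-orthogonal to
the diagonal then `u - w ∈ X ∩ W^ω = 0`, so `(u, w)` is diagonal; if it is moreover orthogonal to
`X × 0`, then `ω(w, ·)` vanishes on `X` and, by skew-symmetry, on `W^ω`, hence `w = 0`.
-/

open Module

/-- The symplectic orthogonal `W^ω = {v ∈ V : ω(v, w) = 0 for all w ∈ W}` of a subspace `W`
with respect to a bilinear form `ω`. -/
def sympOrth {V : Type*} [AddCommGroup V] [Module ℝ V]
    (ω : V →ₗ[ℝ] V →ₗ[ℝ] ℝ) (W : Submodule ℝ V) : Submodule ℝ V where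
  carrier := {v | ∀ w ∈ W, ω v w = 0}
  add_mem' := by
    intro a b ha hb w hw
    simp [map_add, ha w hw, hb w hw]
  zero_mem' := by
    intro w hw
    simp
  smul_mem' := by
    intro c a ha w hw
    simp [map_smul, ha w hw]

/-- The bilinear form `Ω((u₁, w₁), (u₂, w₂)) = ω(u₁, u₂) − ω(w₁, w₂)` on the product `V × W`. -/
def prodForm {V : Type*} [AddCommGroup V] [Module ℝ V]
    (ω : V →ₗ[ℝ] V →ₗ[ℝ] ℝ) (W : Submodule ℝ V) :
    (V × W) →ₗ[ℝ] (V × W) →ₗ[ℝ] ℝ :=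
  LinearMap.mk₂ ℝ (fun p q => ω p.1 q.1 - ω (p.2 : V) (q.2 : V))
    (by intro p p' q; simp [map_add]; ring)
    (by intro c p q; simp [map_smul]; ring)
    (by intro p q q'; simp [map_add]; ring)
    (by intro c p q; simp [map_smul]; ring)

/-- The diagonal `Δ_W = {(w, w) : w ∈ W}` as a subspace of `V × W`. -/
def diagSub {V : Type*} [AddCommGroup V] [Module ℝ V] (W : Submodule ℝ V) :
    Submodule ℝ (V × W) where
  carrier := {p | p.1 = (p.2 : V)}
  add_mem' := by
    intro a b ha hb
    simp only [Set.mem_setOf_eq] at *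
    simp [Prod.fst_add, Prod.snd_add, ha, hb]
  zero_mem' := by simp
  smul_mem' := by
    intro c a ha
    simp only [Set.mem_setOf_eq] at *
    simp [Prod.smul_fst, Prod.smul_snd, ha]

section

variable {V : Type*} [AddCommGroup V] [Module ℝ V] {ω : V →ₗ[ℝ] V →ₗ[ℝ] ℝ} {W : Submodule ℝ V}

variable (W) in
def fstSubSnd : (V × W) →ₗ[ℝ] V :=
  LinearMap.fst ℝ V W - W.subtype ∘ₗ LinearMap.snd ℝ V W

@[simp]
lemma fstSubSnd_apply (p : V × W) : fstSubSnd W p = p.1 - p.2 := rfl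

variable (W) in
lemma diagSub_eq_ker_fstSubSnd : diagSub W = LinearMap.ker (fstSubSnd W) := by
  ext p
  exact sub_eq_zero.symm

variable (W) in
lemma diagSub_le_comap_fstSubSnd (X : Submodule ℝ V) : diagSub W ≤ X.comap (fstSubSnd W) := by
  rw [diagSub_eq_ker_fstSubSnd]
  exact LinearMap.ker_le_comap _

lemma sympOrth_eq_orthogonal (halt : ω.IsAlt) :
    sympOrth ω W = LinearMap.BilinForm.orthogonal ω W := by
  ext v
  simp only [LinearMap.BilinForm.mem_orthogonal_iff]
  exact forall₂_congr fun w _ => halt.eq_iff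

variable (W) in
lemma finrank_sympOrth_add_finrank [FiniteDimensional ℝ V] (halt : ω.IsAlt)
    (hnd : ω.SeparatingLeft) :
    finrank ℝ (sympOrth ω W) + finrank ℝ W = finrank ℝ V := by
  have hB : LinearMap.BilinForm.Nondegenerate ω :=
    halt.isRefl.nondegenerate_iff_separatingLeft.mpr hnd
  rw [sympOrth_eq_orthogonal halt, LinearMap.BilinForm.finrank_orthogonal hB]
  have := W.finrank_le
  omega

lemma prodForm_diag_right (p : V × W) (w : W) :
    prodForm ω W p ((w : V), w) = ω (fstSubSnd W p) w := by
  simp [prodForm]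

lemma fstSubSnd_mem_sympOrth_iff {p : V × W} :
    fstSubSnd W p ∈ sympOrth ω W ↔ ∀ q ∈ diagSub W, prodForm ω W p q = 0 := by
  constructor
  · rintro h ⟨u, w⟩ (rfl : u = w)
    rw [prodForm_diag_right]
    exact h w w.2
  · intro h w hw
    rw [← prodForm_diag_right (w := ⟨w, hw⟩)]
    exact h _ rfl

lemma prodForm_eq_zero_of_mem_diagSub {p q : V × W} (hp : p ∈ diagSub W) (hq : q ∈ diagSub W) :
    prodForm ω W p q = 0 := by
  rw [diagSub_eq_ker_fstSubSnd, LinearMap.mem_ker] at hp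
  exact fstSubSnd_mem_sympOrth_iff.mp (hp ▸ zero_mem _) q hq

lemma mem_diagSub_of_forall_prodForm_eq_zero {X : Submodule ℝ V} (hX : Disjoint X (sympOrth ω W))
    {p : V × W} (hp : p ∈ X.comap (fstSubSnd W)) (h : ∀ q ∈ diagSub W, prodForm ω W p q = 0) :
    p ∈ diagSub W := by
  rw [diagSub_eq_ker_fstSubSnd, LinearMap.mem_ker]
  exact (Submodule.disjoint_def.mp hX) _ hp (fstSubSnd_mem_sympOrth_iff.mpr h)

lemma apply_eq_zero_of_mem_sympOrth (halt : ω.IsAlt) {w k : V} (hw : w ∈ W)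
    (hk : k ∈ sympOrth ω W) : ω w k = 0 :=
  halt.eq_iff.mp (hk w hw)

lemma eq_zero_of_forall_apply_eq_zero_of_codisjoint (halt : ω.IsAlt) (hnd : ω.SeparatingLeft)
    {X : Submodule ℝ V} (hX : Codisjoint (sympOrth ω W) X) {w : V} (hw : w ∈ W)
    (hwX : ∀ x ∈ X, ω w x = 0) : w = 0 := by
  have hker : sympOrth ω W ⊔ X ≤ LinearMap.ker (ω w) :=
    sup_le (fun k hk => apply_eq_zero_of_mem_sympOrth halt hw hk) hwX
  rw [hX.eq_top] at hker
  exact hnd w fun u => hker Submodule.mem_top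

lemma eq_zero_of_forall_prodForm_eq_zero (halt : ω.IsAlt) (hnd : ω.SeparatingLeft)
    {X : Submodule ℝ V} (hX : IsCompl (sympOrth ω W) X) {p : V × W}
    (hp : p ∈ X.comap (fstSubSnd W)) (h : ∀ q ∈ X.comap (fstSubSnd W), prodForm ω W p q = 0) :
    p = 0 := by
  have hdiag : p.1 = p.2 :=
    mem_diagSub_of_forall_prodForm_eq_zero hX.symm.disjoint hp fun q hq =>
      h q (diagSub_le_comap_fstSubSnd W X hq)
  have hsnd : (p.2 : V) = 0 := by
    refine eq_zero_of_forall_apply_eq_zero_of_codisjoint halt hnd hX.codisjoint p.2.2 fun x hx => ?_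
    have hxS : ((x, 0) : V × W) ∈ X.comap (fstSubSnd W) := by simpa using hx
    simpa [prodForm, hdiag] using h _ hxS
  exact Prod.ext (hdiag.trans hsnd) (Subtype.ext hsnd)

lemma finrank_comap_fstSubSnd [FiniteDimensional ℝ V] (X : Submodule ℝ V) :
    finrank ℝ (X.comap (fstSubSnd W)) = finrank ℝ W + finrank ℝ X := by
  let g : (W × X) →ₗ[ℝ] V × W :=
    (W.subtype ∘ₗ LinearMap.fst ℝ W X + X.subtype ∘ₗ LinearMap.snd ℝ W X).prod
      (LinearMap.fst ℝ W X)
  have hg : Function.Injective g := by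
    rw [injective_iff_map_eq_zero]
    rintro ⟨w, x⟩ h
    have hw : w = 0 := congrArg Prod.snd h
    have hx : (x : V) = 0 := by simpa [g, hw] using congrArg Prod.fst h
    rw [hw, Submodule.coe_eq_zero.mp hx, Prod.mk_zero_zero]
  have hrange : LinearMap.range g = X.comap (fstSubSnd W) := by
    ext p
    constructor
    · rintro ⟨⟨w, x⟩, rfl⟩
      simp [g]
    · intro hp
      exact ⟨(p.2, ⟨_, hp⟩), by simp [g]⟩
  rw [← hrange, LinearMap.finrank_range_of_inj hg, Module.finrank_prod]

end

theorem exists_symplectic_subspace_with_lagrangian_diagonal_general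
    {V : Type*} [AddCommGroup V] [Module ℝ V] [FiniteDimensional ℝ V]
    (ω : V →ₗ[ℝ] V →ₗ[ℝ] ℝ)
    (halt : ∀ v, ω v v = 0)
    (hnd : ∀ v, (∀ u, ω v u = 0) → v = 0)
    (W : Submodule ℝ V) :
    ∃ S : Submodule ℝ (V × W),
      diagSub W ≤ S ∧
      (∀ p ∈ S, (∀ q ∈ S, prodForm ω W p q = 0) → p = 0) ∧
      finrank ℝ S = 2 * finrank ℝ W ∧
      (diagSub W : Set (V × W)) =
        {p : V × W | p ∈ S ∧ ∀ q ∈ diagSub W, prodForm ω W p q = 0} := by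
  obtain ⟨X, hX⟩ := (sympOrth ω W).exists_isCompl
  have hdim : finrank ℝ X = finrank ℝ W := by
    have := finrank_sympOrth_add_finrank W halt hnd
    have := Submodule.finrank_add_eq_of_isCompl hX
    omega
  refine ⟨X.comap (fstSubSnd W), diagSub_le_comap_fstSubSnd W X,
    fun p hp h => eq_zero_of_forall_prodForm_eq_zero halt hnd hX hp h,
    by rw [finrank_comap_fstSubSnd, hdim, two_mul], ?_⟩
  ext p
  exact ⟨fun hp => ⟨diagSub_le_comap_fstSubSnd W X hp,
      fun q hq => prodForm_eq_zero_of_mem_diagSub hp hq⟩,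
    fun ⟨hpS, h⟩ => mem_diagSub_of_forall_prodForm_eq_zero hX.symm.disjoint hpS h⟩

/-- Let `(V, ω)` be a finite-dimensional real symplectic vector space and
`W ⊆ V` a coisotropic subspace (`W^ω ⊆ W`). Equip `V × W` with the form
`Ω((u₁, w₁), (u₂, w₂)) = ω(u₁, u₂) − ω(w₁, w₂)` and let `Δ_W` be the diagonal.
Then there is a subspace `S ⊆ V × W` containing `Δ_W` such that `Ω|_S` is nondegenerate,
`dim S = 2 · dim W`, and `Δ_W` is Lagrangian in `(S, Ω|_S)`: it equals its `Ω`-orthogonal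
complement computed inside `S`. -/
theorem exists_symplectic_subspace_with_lagrangian_diagonal
    {V : Type*} [AddCommGroup V] [Module ℝ V] [FiniteDimensional ℝ V]
    (ω : V →ₗ[ℝ] V →ₗ[ℝ] ℝ)
    (halt : ∀ v, ω v v = 0)
    (hnd : ∀ v, (∀ u, ω v u = 0) → v = 0)
    (W : Submodule ℝ V)
    (hco : sympOrth ω W ≤ W) :
    ∃ S : Submodule ℝ (V × W),
      diagSub W ≤ S ∧
      (∀ p ∈ S, (∀ q ∈ S, prodForm ω W p q = 0) → p = 0) ∧
      finrank ℝ S = 2 * finrank ℝ W ∧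
      (diagSub W : Set (V × W)) =
        {p : V × W | p ∈ S ∧ ∀ q ∈ diagSub W, prodForm ω W p q = 0} :=
  exists_symplectic_subspace_with_lagrangian_diagonal_general ω halt hnd W
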